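/- arXiv:2407.13586 — 4 statements merged into one kernel-verified Lean document; each statement's English description precedes it below -/
import Mathlib

section
/- Let k be a field and let (a,b), (c,d) ∈ k × k be nonzero vectors with a·d ≠ b·c. Then there do not exist a k-linear automorphism τ of k × k and nonzero scalars λ_w, λ_x, λ_y, λ_z ∈ k such that τ(1,0) = λ_w·(1,0), τ(0,1) = λ_x·(0,1), τ(1,1) = λ_y·(1,1) and τ(a,b) = λ_z·(c,d). Equivalently, the poset modules P_{a,b} and P_{c,d} are not isomorphic whenever [a:b] ≠ [c:d] as points of the projective line over k. -/
/-- If `(a,b)` and `(c,d)` are nonzero vectors of `k × k` with `a·d ≠ b·c`,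
then there is no `k`-linear automorphism of `k × k` scaling `(1,0)`, `(0,1)`,
`(1,1)` by nonzero scalars and carrying the line through `(a,b)` to the line
through `(c,d)`.  (This says the poset modules `P_{a,b}` and `P_{c,d}` of the
paper are non-isomorphic when `[a:b] ≠ [c:d]`.) -/
theorem no_automorphism_of_distinct_projective_points
    (k : Type*) [Field k] (a b c d : k)
    (hab : (a, b) ≠ ((0 : k), (0 : k))) (hcd : (c, d) ≠ ((0 : k), (0 : k)))
    (h : a * d ≠ b * c) :
    ¬ ∃ (τ : (k × k) ≃ₗ[k] (k × k)) (lw lx ly lz : k),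
        lw ≠ 0 ∧ lx ≠ 0 ∧ ly ≠ 0 ∧ lz ≠ 0 ∧
        τ ((1 : k), (0 : k)) = lw • ((1 : k), (0 : k)) ∧
        τ ((0 : k), (1 : k)) = lx • ((0 : k), (1 : k)) ∧
        τ ((1 : k), (1 : k)) = ly • ((1 : k), (1 : k)) ∧
        τ (a, b) = lz • (c, d) := by
  rintro ⟨τ, lw, lx, ly, lz, hlw, hlx, hly, hlz, h1, h2, h3, h4⟩
  have e1 : ((1 : k), (1 : k)) = ((1 : k), (0 : k)) + ((0 : k), (1 : k)) := by
    simp [Prod.ext_iff]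
  rw [e1, map_add, h1, h2] at h3
  obtain ⟨hwy, hxy⟩ : lw = ly ∧ lx = ly := by
    simpa [Prod.ext_iff] using h3
  have e2 : ((a : k), (b : k)) = a • ((1 : k), (0 : k)) + b • ((0 : k), (1 : k)) := by
    simp [Prod.ext_iff]
  rw [e2, map_add, map_smul, map_smul, h1, h2] at h4
  obtain ⟨ha, hb⟩ : a * lw = lz * c ∧ b * lx = lz * d := by
    simpa [Prod.ext_iff, mul_comm] using h4
  rw [hwy] at ha
  rw [hxy] at hb
  apply h
  have : (a * d) * ly = (b * c) * ly := by
    calc (a * d) * ly = (a * ly) * d := by ring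
    _ = (lz * c) * d := by rw [ha]
    _ = (lz * d) * c := by ring
    _ = (b * ly) * c := by rw [hb]
    _ = (b * c) * ly := by ring
  exact mul_right_cancel₀ hly this
end

section
/- Let k be an infinite field and let P be the five-element poset {v, w, x, y, z} with w ≤ v, x ≤ v, y ≤ v, z ≤ v as its only nontrivial relations. Then the functors P_{a,1} : P → Vect_k for a ∈ k are pairwise non-isomorphic for distinct values of a; consequently there are infinitely many pairwise non-isomorphic functors from P to k-vector spaces whose value at v is 2-dimensional and whose values at w, x, y, z are 1-dimensional. -/
open CategoryTheory

/-- The five-element poset `{v, w, x, y, z}` whose only nontrivial order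
relations are `w ≤ v`, `x ≤ v`, `y ≤ v`, `z ≤ v`. -/
inductive Pfive : Type
  | v | w | x | y | z
  deriving DecidableEq

namespace Pfive

instance : PartialOrder Pfive where
  le p q := p = q ∨ q = Pfive.v
  le_refl p := Or.inl rfl
  le_trans p q r h1 h2 := by
    rcases h1 with h1 | h1
    · subst h1; exact h2
    · rcases h2 with h2 | h2
      · subst h2; exact Or.inr h1
      · exact Or.inr h2
  le_antisymm p q h1 h2 := by
    rcases h1 with h1 | h1
    · exact h1
    · rcases h2 with h2 | h2
      · exact h2.symm
      · rw [h1, h2]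

lemma le_iff (p q : Pfive) : p ≤ q ↔ (p = q ∨ q = Pfive.v) := Iff.rfl

end Pfive

variable (k : Type) [Field k]

/-- The value of the poset module `P_{a,1}` at a point of `Pfive`:
`k²` at `v`, and `k` at `w`, `x`, `y`, `z`. -/
def Pobj : Pfive → ModuleCat.{0} k
  | .v => ModuleCat.of k (k × k)
  | _ => ModuleCat.of k k

lemma Pobj_of_ne_v (p : Pfive) (hp : p ≠ Pfive.v) : Pobj k p = ModuleCat.of k k := by
  cases p
  · exact absurd rfl hp
  all_goals rfl

/-- The column vector labelling the structure map `p → v` of `P_{a,1}`: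
`(1,0)ᵗ` at `w`, `(0,1)ᵗ` at `x`, `(1,1)ᵗ` at `y` and `(a,1)ᵗ` at `z`. -/
def Pvec (a : k) : Pfive → k × k
  | .w => (1, 0)
  | .x => (0, 1)
  | .y => (1, 1)
  | .z => (a, 1)
  | .v => (0, 0)

/-- The structure maps of the poset module `P_{a,1}`. -/
noncomputable def Pmap (a : k) : ∀ p q : Pfive, p ≤ q → (Pobj k p ⟶ Pobj k q) :=
  fun p q h =>
    if hpq : p = q then eqToHom (congrArg (Pobj k) hpq)
    else
      have hq : q = Pfive.v := ((Pfive.le_iff p q).mp h).resolve_left hpq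
      have hp : p ≠ Pfive.v := fun hpv => hpq (hpv.trans hq.symm)
      eqToHom (Pobj_of_ne_v k p hp) ≫
        ModuleCat.ofHom (LinearMap.toSpanSingleton k (k × k) (Pvec k a p)) ≫
        eqToHom (congrArg (Pobj k) hq).symm

lemma Pmap_self (a : k) (p : Pfive) (h : p ≤ p) : Pmap k a p p h = 𝟙 (Pobj k p) := by
  simp [Pmap]

/-- The poset module `P_{a,1} : Pfive ⥤ Vect_k` of the paper: it assigns `k²`
to `v`, `k` to `w, x, y, z`, and the maps `w → v`, `x → v`, `y → v`, `z → v`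
are multiplication by the column vectors `(1,0)ᵗ`, `(0,1)ᵗ`, `(1,1)ᵗ`, `(a,1)ᵗ`. -/
noncomputable def Pfunc (a : k) : Pfive ⥤ ModuleCat.{0} k where
  obj := Pobj k
  map {p q} f := Pmap k a p q (leOfHom f)
  map_id p := Pmap_self k a p le_rfl
  map_comp {p q r} f g := by
    by_cases hpq : p = q
    · subst hpq
      rw [Subsingleton.elim f (𝟙 p), Category.id_comp]
      try dsimp only
      rw [Pmap_self, Category.id_comp]
    · have hq : q = Pfive.v := (((Pfive.le_iff p q).mp (leOfHom f))).resolve_left hpq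
      subst hq
      have hr : r = Pfive.v := by
        rcases (Pfive.le_iff _ r).mp (leOfHom g) with h | h
        · exact h.symm
        · exact h
      subst hr
      rw [Subsingleton.elim g (𝟙 Pfive.v), Category.comp_id]
      try dsimp only
      rw [Pmap_self, Category.comp_id]

/-!
At `v`, a morphism `Pfunc k a ⟶ Pfunc k a'` is a linear endomorphism of `k²` that maps the
line spanned by each structure vector of `Pfunc k a` into the corresponding line of
`Pfunc k a'`. Preserving the three lines through `(1,0)`, `(0,1)`, `(1,1)` forces it to be a
scalar `c`, and `c ≠ 0` for an isomorphism; then `c • (a,1)` lies on the line through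
`(a',1)` only if `a = a'`.
-/

section

variable {k}

lemma range_Pfunc_map (a : k) {p : Pfive} (hp : p ≠ Pfive.v) (f : p ⟶ Pfive.v) :
    LinearMap.range ((Pfunc k a).map f).hom = k ∙ Pvec k a p := by
  cases p
  · exact absurd rfl hp
  all_goals exact (LinearMap.span_singleton_eq_range k (k × k) _).symm

lemma app_v_Pvec_mem_span {a a' : k} (e : Pfunc k a ⟶ Pfunc k a') {p : Pfive}
    (hp : p ≠ Pfive.v) :
    (e.app Pfive.v).hom (Pvec k a p) ∈ k ∙ Pvec k a' p := by
  let f : p ⟶ Pfive.v := homOfLE (Or.inr rfl)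
  obtain ⟨s, hs⟩ : Pvec k a p ∈ LinearMap.range ((Pfunc k a).map f).hom := by
    rw [range_Pfunc_map a hp]; exact Submodule.mem_span_singleton_self _
  rw [← range_Pfunc_map a' hp f, ← hs]
  exact ⟨(e.app p).hom s, (NatTrans.naturality_apply e f s).symm⟩

lemma LinearMap.exists_eq_smul_id_of_mem_span_frame (T : k × k →ₗ[k] k × k)
    (h₁ : T (1, 0) ∈ k ∙ (1, 0)) (h₂ : T (0, 1) ∈ k ∙ (0, 1)) (h₃ : T (1, 1) ∈ k ∙ (1, 1)) :
    ∃ c : k, T = c • LinearMap.id := by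
  obtain ⟨c₁, hc₁⟩ := Submodule.mem_span_singleton.mp h₁
  obtain ⟨c₂, hc₂⟩ := Submodule.mem_span_singleton.mp h₂
  obtain ⟨c₃, hc₃⟩ := Submodule.mem_span_singleton.mp h₃
  have hsum : T (1, 1) = T (1, 0) + T (0, 1) := by
    rw [← map_add, Prod.mk_add_mk, add_zero, zero_add]
  rw [← hc₁, ← hc₂, ← hc₃] at hsum
  simp only [Prod.smul_mk, smul_eq_mul, mul_one, mul_zero, Prod.mk_add_mk, add_zero, zero_add,
    Prod.mk.injEq] at hsum
  obtain ⟨rfl, rfl⟩ := hsum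
  exact ⟨c₃, by ext <;> simp [← hc₁, ← hc₂]⟩

lemma eq_of_injective_of_mem_span (T : k × k →ₗ[k] k × k) (hT : Function.Injective T) {a a' : k}
    (h₁ : T (1, 0) ∈ k ∙ (1, 0)) (h₂ : T (0, 1) ∈ k ∙ (0, 1)) (h₃ : T (1, 1) ∈ k ∙ (1, 1))
    (h₄ : T (a, 1) ∈ k ∙ (a', 1)) : a = a' := by
  obtain ⟨c, rfl⟩ := T.exists_eq_smul_id_of_mem_span_frame h₁ h₂ h₃
  obtain ⟨d, hd⟩ := Submodule.mem_span_singleton.mp h₄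
  have hc : c ≠ 0 := by
    rintro rfl
    exact one_ne_zero (congrArg Prod.fst (hT (a₁ := (1, 0)) (a₂ := 0) (by simp)))
  simp only [LinearMap.smul_apply, LinearMap.id_apply, Prod.smul_mk, smul_eq_mul, mul_one,
    Prod.mk.injEq] at hd
  obtain ⟨hda, rfl⟩ := hd
  exact mul_left_cancel₀ hc hda.symm

lemma eq_of_Pfunc_iso {a a' : k} (e : Pfunc k a ≅ Pfunc k a') : a = a' :=
  eq_of_injective_of_mem_span (e.app Pfive.v).hom.hom (e.app Pfive.v).toLinearEquiv.injective
    (app_v_Pvec_mem_span e.hom (p := Pfive.w) nofun)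
    (app_v_Pvec_mem_span e.hom (p := Pfive.x) nofun)
    (app_v_Pvec_mem_span e.hom (p := Pfive.y) nofun)
    (app_v_Pvec_mem_span e.hom (p := Pfive.z) nofun)

lemma Pfunc_injective : Function.Injective (Pfunc k) :=
  fun _ _ h => eq_of_Pfunc_iso (eqToIso h)

lemma finrank_Pfunc_obj_v (a : k) : Module.finrank k ((Pfunc k a).obj Pfive.v) = 2 := by
  change Module.finrank k (k × k) = 2
  simp

lemma finrank_Pfunc_obj_of_ne_v (a : k) {p : Pfive} (hp : p ≠ Pfive.v) :
    Module.finrank k ((Pfunc k a).obj p) = 1 := by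
  cases p
  · exact absurd rfl hp
  all_goals exact Module.finrank_self k

end

/-- For an infinite field `k`, the poset modules `P_{a,1}` on the five-element
poset `Pfive` are pairwise non-isomorphic for distinct `a ∈ k`; consequently
there are infinitely many pairwise non-isomorphic functors `Pfive ⥤ Vect_k`
whose value at `v` is 2-dimensional and whose values at `w, x, y, z` are
1-dimensional. -/
theorem infinitely_many_nonisomorphic_poset_modules
    (k : Type) [Field k] [Infinite k] :
    (∀ a a' : k, a ≠ a' → IsEmpty (Pfunc k a ≅ Pfunc k a')) ∧
    ∃ S : Set (Pfive ⥤ ModuleCat.{0} k), S.Infinite ∧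
      (∀ F ∈ S, Module.finrank k (F.obj Pfive.v) = 2 ∧
        ∀ p : Pfive, p ≠ Pfive.v → Module.finrank k (F.obj p) = 1) ∧
      (∀ F ∈ S, ∀ G ∈ S, F ≠ G → IsEmpty (F ≅ G)) := by
  have nonisomorphic (a a' : k) (h : a ≠ a') : IsEmpty (Pfunc k a ≅ Pfunc k a') :=
    ⟨fun e => h (eq_of_Pfunc_iso e)⟩
  refine ⟨nonisomorphic, Set.range (Pfunc k), Set.infinite_range_of_injective Pfunc_injective,
    ?_, ?_⟩
  · rintro _ ⟨a, rfl⟩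
    exact ⟨finrank_Pfunc_obj_v a, fun p hp => finrank_Pfunc_obj_of_ne_v a hp⟩
  · rintro _ ⟨a, rfl⟩ _ ⟨a', rfl⟩ hne
    exact nonisomorphic a a' (mt (congrArg (Pfunc k)) hne)
end

section
/- Let k be a field, N ≥ 1, and let F, G be functors from the linearly ordered set Fin N (with its usual order, viewed as a category) to k-vector spaces such that every F(i) and every G(i) is finite dimensional. If dim F(i) = dim G(i) for every i, and for every pair i ≤ j the rank of the linear map F(i ≤ j) : F(i) → F(j) equals the rank of G(i ≤ j) : G(i) → G(j), then F and G are naturally isomorphic. -/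
/-!
Build the components `e i : F i ≅ G i` one index at a time, keeping the invariant that `e i`
carries the flag of kernels `ker (F i → F j)`, `j ≥ i`, onto the corresponding flag of `G`;
by rank–nullity the two flags have the same dimensions. Given `e i`, the next component `e'` must
satisfy `e' ∘ F (i → i + 1) = G (i → i + 1) ∘ e i` and carry the kernel flag at `i + 1`. The
invariant at `i` says that the two flags at `i + 1` have the same preimages under these two maps,
and a flag of subspaces with prescribed preimages and dimensions can be matched by an isomorphism
compatible with the maps: restrict to the largest subspace of the flag, match the shorter flag
there, and extend through complements.
-/

open CategoryTheory Module LinearMap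

section LinearAlgebra

variable {k X V W : Type*} [Field k] [AddCommGroup X] [Module k X]
  [AddCommGroup V] [Module k V] [AddCommGroup W] [Module k W]
  [FiniteDimensional k V] [FiniteDimensional k W]

theorem LinearEquiv.exists_comp_subtype_eq {S : Submodule k V} {T : Submodule k W}
    (e : S ≃ₗ[k] T) (h : finrank k V = finrank k W) :
    ∃ α : V ≃ₗ[k] W, α.toLinearMap ∘ₗ S.subtype = T.subtype ∘ₗ e.toLinearMap := by
  obtain ⟨S', hS'⟩ := S.exists_isCompl
  obtain ⟨T', hT'⟩ := T.exists_isCompl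
  have hST' : finrank k S' = finrank k T' := by
    have := Submodule.finrank_add_eq_of_isCompl hS'
    have := Submodule.finrank_add_eq_of_isCompl hT'
    have := e.finrank_eq
    omega
  obtain ⟨g⟩ := FiniteDimensional.nonempty_linearEquiv_of_finrank_eq hST'
  refine ⟨(Submodule.prodEquivOfIsCompl S S' hS').symm ≪≫ₗ e.prodCongr g ≪≫ₗ
    Submodule.prodEquivOfIsCompl T T' hT', ?_⟩
  ext x
  simp

theorem LinearMap.exists_linearEquiv_comp_eq_of_ker_eq (φ : X →ₗ[k] V) (ψ : X →ₗ[k] W)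
    (hker : ker φ = ker ψ) (h : finrank k V = finrank k W) :
    ∃ α : V ≃ₗ[k] W, α.toLinearMap ∘ₗ φ = ψ := by
  let e : range φ ≃ₗ[k] range ψ :=
    φ.quotKerEquivRange.symm ≪≫ₗ Submodule.quotEquivOfEq _ _ hker ≪≫ₗ ψ.quotKerEquivRange
  obtain ⟨α, hα⟩ := e.exists_comp_subtype_eq h
  refine ⟨α, LinearMap.ext fun x => ?_⟩
  simpa [e, quotKerEquivRange_symm_apply_image] using congr($hα ⟨φ x, mem_range_self φ x⟩)

theorem LinearMap.exists_linearEquiv_comp_eq_of_comap_eq (f : X →ₗ[k] V) (f' : X →ₗ[k] W)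
    {V₀ : Submodule k V} {W₀ : Submodule k W} (e₀ : V₀ ≃ₗ[k] W₀)
    (hcomap : V₀.comap f = W₀.comap f')
    (he₀ : ∀ x (hx : f x ∈ V₀), (e₀ ⟨f x, hx⟩ : W) = f' x)
    (h : finrank k V = finrank k W) :
    ∃ α : V ≃ₗ[k] W, α.toLinearMap ∘ₗ f = f' ∧
      α.toLinearMap ∘ₗ V₀.subtype = W₀.subtype ∘ₗ e₀.toLinearMap := by
  -- `α` is obtained by comparing `(x, v) ↦ f x + v` with `(x, v) ↦ f' x + e₀ v` on `X × V₀`.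
  have hker : ker (f.coprod V₀.subtype) = ker (f'.coprod (W₀.subtype ∘ₗ e₀.toLinearMap)) := by
    ext ⟨x, v⟩
    simp only [mem_ker, coprod_apply, Submodule.coe_subtype, coe_comp, LinearEquiv.coe_coe,
      Function.comp_apply]
    constructor
    · intro hxv
      have hx : f x ∈ V₀ := by rw [eq_neg_of_add_eq_zero_left hxv]; exact neg_mem v.2
      rw [← he₀ x hx, ← Submodule.coe_add, ← map_add, Submodule.coe_eq_zero,
        LinearEquiv.map_eq_zero_iff]
      exact Subtype.ext hxv
    · intro hxv
      have hx : f x ∈ V₀ := by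
        change x ∈ V₀.comap f
        rw [hcomap, Submodule.mem_comap, eq_neg_of_add_eq_zero_left hxv]
        exact neg_mem (e₀ v).2
      rw [← he₀ x hx, ← Submodule.coe_add, ← map_add, Submodule.coe_eq_zero,
        LinearEquiv.map_eq_zero_iff] at hxv
      exact congr_arg Subtype.val hxv
  obtain ⟨α, hα⟩ := exists_linearEquiv_comp_eq_of_ker_eq _ _ hker h
  refine ⟨α, LinearMap.ext fun x => ?_, LinearMap.ext fun v => ?_⟩
  · simpa using LinearMap.congr_fun hα (x, 0)
  · simpa using LinearMap.congr_fun hα (0, v)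

theorem LinearMap.exists_linearEquiv_comp_eq_forall_map_eq {ι : Type*} [LinearOrder ι]
    (s : Finset ι) (f : X →ₗ[k] V) (f' : X →ₗ[k] W)
    {A : ι → Submodule k V} {B : ι → Submodule k W} (hA : Monotone A) (hB : Monotone B)
    (hcomap : ∀ j ∈ s, (A j).comap f = (B j).comap f')
    (hdim : ∀ j ∈ s, finrank k (A j) = finrank k (B j))
    (hker : ker f = ker f') (h : finrank k V = finrank k W) :
    ∃ α : V ≃ₗ[k] W, α.toLinearMap ∘ₗ f = f' ∧ ∀ j ∈ s, (A j).map α.toLinearMap = B j := by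
  classical
  induction s using Finset.induction_on_max generalizing X V W with
  | empty =>
    obtain ⟨α, hα⟩ := exists_linearEquiv_comp_eq_of_ker_eq f f' hker h
    exact ⟨α, hα, by simp⟩
  | insert a s has ih =>
    have ha := Finset.mem_insert_self a s
    have hf'a : ∀ x ∈ (A a).comap f, f' x ∈ B a := fun x hx => by rwa [hcomap a ha] at hx
    obtain ⟨α₀, hα₀f, hα₀A⟩ := ih (f.restrict fun x hx => hx) (f'.restrict hf'a)
      (A := fun j => (A j).comap (A a).subtype) (B := fun j => (B j).comap (B a).subtype)
      (fun _ _ hij => Submodule.comap_mono (hA hij))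
      (fun _ _ hij => Submodule.comap_mono (hB hij))
      (fun j hj => by
        ext x
        exact SetLike.ext_iff.1 (hcomap j (Finset.mem_insert_of_mem hj)) (x : X))
      (fun j hj => by
        rw [(Submodule.comapSubtypeEquivOfLe (hA (has j hj).le)).finrank_eq,
          (Submodule.comapSubtypeEquivOfLe (hB (has j hj).le)).finrank_eq]
        exact hdim j (Finset.mem_insert_of_mem hj))
      (by rw [ker_restrict, ker_restrict, hker])
      (hdim a ha)
    obtain ⟨α, hαf, hαA⟩ := exists_linearEquiv_comp_eq_of_comap_eq f f' α₀ (hcomap a ha)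
      (fun x hx => congr_arg Subtype.val (LinearMap.congr_fun hα₀f ⟨x, hx⟩)) h
    have map_eq : ∀ j, A j ≤ A a → B j ≤ B a →
        ((A j).comap (A a).subtype).map α₀.toLinearMap = (B j).comap (B a).subtype →
        (A j).map α.toLinearMap = B j := by
      intro j hAj hBj hj
      rw [← inf_eq_right.2 hAj, ← Submodule.map_comap_subtype, ← Submodule.map_comp, hαA,
        Submodule.map_comp, hj, Submodule.map_comap_subtype, inf_eq_right.2 hBj]
    refine ⟨α, hαf, fun j hj => ?_⟩
    rcases Finset.mem_insert.1 hj with rfl | hj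
    · exact map_eq j le_rfl le_rfl (by simp)
    · exact map_eq j (hA (has j hj).le) (hB (has j hj).le) (hα₀A j hj)

end LinearAlgebra

theorem CategoryTheory.ComposableArrows.nonempty_iso_of_exists_succ {C : Type*} [Category C]
    {n : ℕ} {F G : ComposableArrows C n} (P : ∀ i, (F.obj i ≅ G.obj i) → Prop)
    (h₀ : ∃ e, P 0 e)
    (hsucc : ∀ (i : Fin n) (e : F.obj i.castSucc ≅ G.obj i.castSucc), P _ e →
      ∃ e' : F.obj i.succ ≅ G.obj i.succ, P _ e' ∧
        F.map (homOfLE (Fin.castSucc_le_succ i)) ≫ e'.hom =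
          e.hom ≫ G.map (homOfLE (Fin.castSucc_le_succ i))) :
    Nonempty (F ≅ G) := by
  choose e₀ he₀ using h₀
  choose step hstepP hstep using hsucc
  let app : ∀ i, {e // P i e} :=
    Fin.induction ⟨e₀, he₀⟩ fun i e => ⟨step i e.1 e.2, hstepP i e.1 e.2⟩
  refine ⟨isoMk (fun i => (app i).1) fun i hi => ?_⟩
  have happ : app (Fin.succ ⟨i, hi⟩) = ⟨_, hstepP _ _ (app (Fin.castSucc ⟨i, hi⟩)).2⟩ :=
    Fin.induction_succ _ _ _
  exact (congr_arg (fun e => F.map _ ≫ e.1.hom) happ).trans (hstep _ _ _)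

namespace PosetModule

variable {k : Type*} [Field k] {ι : Type*} [LinearOrder ι]

def kernelFlag (F : ι ⥤ ModuleCat k) (i j : ι) : Submodule k (F.obj i) :=
  ker (F.map (homOfLE (le_max_left i j))).hom

variable (F G : ι ⥤ ModuleCat k)

theorem hom_map_homOfLE_trans {i j l : ι} (h : i ≤ j) (h' : j ≤ l) :
    (F.map (homOfLE (h.trans h'))).hom = (F.map (homOfLE h')).hom ∘ₗ (F.map (homOfLE h)).hom := by
  rw [← homOfLE_comp h h', F.map_comp, ModuleCat.hom_comp]

theorem kernelFlag_eq_ker {i j : ι} (h : i ≤ j) :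
    kernelFlag F i j = ker (F.map (homOfLE h)).hom := by
  have ker_congr : ∀ t (ht : t = j) (h' : i ≤ t),
      ker (F.map (homOfLE h')).hom = ker (F.map (homOfLE h)).hom := by
    rintro t rfl h'
    rfl
  exact ker_congr _ (max_eq_right h) _

theorem kernelFlag_mono (i : ι) : Monotone (kernelFlag F i) := fun j j' hjj' => by
  rw [kernelFlag, kernelFlag,
    hom_map_homOfLE_trans F (le_max_left i j) (max_le_max_left i hjj')]
  exact ker_le_ker_comp _ _

theorem comap_kernelFlag {i m : ι} (h : i ≤ m) (j : ι) :
    (kernelFlag F m j).comap (F.map (homOfLE h)).hom = kernelFlag F i (max m j) := by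
  rw [kernelFlag_eq_ker F (h.trans (le_max_left m j)), kernelFlag,
    hom_map_homOfLE_trans F h (le_max_left m j), ker_comp]

variable {F G} [∀ i, FiniteDimensional k (F.obj i)] [∀ i, FiniteDimensional k (G.obj i)]

theorem finrank_kernelFlag_eq (hdim : ∀ i, finrank k (F.obj i) = finrank k (G.obj i))
    (hrank : ∀ (i j : ι) (h : i ≤ j),
      finrank k (range (F.map (homOfLE h)).hom) = finrank k (range (G.map (homOfLE h)).hom))
    (i j : ι) : finrank k (kernelFlag F i j) = finrank k (kernelFlag G i j) := by
  have hF := finrank_range_add_finrank_ker (F.map (homOfLE (le_max_left i j))).hom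
  have hG := finrank_range_add_finrank_ker (G.map (homOfLE (le_max_left i j))).hom
  have := hrank i _ (le_max_left i j)
  have := hdim i
  rw [kernelFlag, kernelFlag]
  omega

variable [Fintype ι]

theorem exists_iso_map_kernelFlag_eq {i : ι} (hdim : finrank k (F.obj i) = finrank k (G.obj i))
    (hflag : ∀ j, finrank k (kernelFlag F i j) = finrank k (kernelFlag G i j)) :
    ∃ e : F.obj i ≅ G.obj i, ∀ j, (kernelFlag F i j).map e.hom.hom = kernelFlag G i j := by
  obtain ⟨α, -, hα⟩ := exists_linearEquiv_comp_eq_forall_map_eq Finset.univ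
    (0 : F.obj i →ₗ[k] F.obj i) (0 : F.obj i →ₗ[k] G.obj i) (kernelFlag_mono F i)
    (kernelFlag_mono G i) (by simp) (fun j _ => hflag j) (by simp) hdim
  exact ⟨α.toModuleIso, fun j => hα j (Finset.mem_univ j)⟩

theorem exists_iso_map_kernelFlag_eq_comm {i m : ι} (h : i ≤ m)
    (hdim : finrank k (F.obj m) = finrank k (G.obj m))
    (hflag : ∀ j, finrank k (kernelFlag F m j) = finrank k (kernelFlag G m j))
    (e : F.obj i ≅ G.obj i) (he : ∀ j, (kernelFlag F i j).map e.hom.hom = kernelFlag G i j) :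
    ∃ e' : F.obj m ≅ G.obj m, (∀ j, (kernelFlag F m j).map e'.hom.hom = kernelFlag G m j) ∧
      F.map (homOfLE h) ≫ e'.hom = e.hom ≫ G.map (homOfLE h) := by
  have hcomap : ∀ j, (kernelFlag G i j).comap e.hom.hom = kernelFlag F i j := fun j => by
    rw [← he j]
    exact Submodule.comap_map_eq_of_injective (f := e.hom.hom) e.toLinearEquiv.injective _
  obtain ⟨α, hαf, hα⟩ := exists_linearEquiv_comp_eq_forall_map_eq Finset.univ
    (F.map (homOfLE h)).hom ((G.map (homOfLE h)).hom ∘ₗ e.hom.hom) (kernelFlag_mono F m)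
    (kernelFlag_mono G m)
    (fun j _ => by rw [comap_kernelFlag, Submodule.comap_comp, comap_kernelFlag, hcomap])
    (fun j _ => hflag j)
    (by rw [ker_comp, ← kernelFlag_eq_ker, ← kernelFlag_eq_ker, hcomap]) hdim
  exact ⟨α.toModuleIso, fun j => hα j (Finset.mem_univ j), ModuleCat.hom_ext hαf⟩

end PosetModule

/-- A pointwise finite-dimensional poset module over the finite linear order
`Fin N` is determined up to natural isomorphism by the dimensions of its values
and the ranks of its structure maps. -/
theorem linear_poset_module_iso_of_rank_eq
    (k : Type) [Field k] (N : ℕ) (hN : 1 ≤ N)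
    (F G : Fin N ⥤ ModuleCat.{0} k)
    (hFfin : ∀ i : Fin N, FiniteDimensional k (F.obj i))
    (hGfin : ∀ i : Fin N, FiniteDimensional k (G.obj i))
    (hdim : ∀ i : Fin N, Module.finrank k (F.obj i) = Module.finrank k (G.obj i))
    (hrank : ∀ (i j : Fin N) (h : i ≤ j),
      Module.finrank k (LinearMap.range (F.map (homOfLE h)).hom)
        = Module.finrank k (LinearMap.range (G.map (homOfLE h)).hom)) :
    Nonempty (F ≅ G) := by
  obtain ⟨n, rfl⟩ : ∃ n, N = n + 1 := ⟨N - 1, by omega⟩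
  have hflag := PosetModule.finrank_kernelFlag_eq hdim hrank
  exact ComposableArrows.nonempty_iso_of_exists_succ
    (fun i e => ∀ j, (PosetModule.kernelFlag F i j).map e.hom.hom = PosetModule.kernelFlag G i j)
    (PosetModule.exists_iso_map_kernelFlag_eq (hdim 0) (hflag 0))
    (fun i e he => PosetModule.exists_iso_map_kernelFlag_eq_comm _ (hdim _) (hflag _) e he)
end

section
/- Let k be a field and let N ≥ 1 and M ≥ 0 be integers. Then there exist finitely many functors F_1, …, F_t from the linearly ordered set Fin N (viewed as a category) to k-vector spaces such that every functor F : Fin N → Vect_k with dim F(i) ≤ M for all i is naturally isomorphic to some F_s. In other words, the functors Fin N → Vect_k with all pointwise dimensions at most M fall into finitely many isomorphism classes. -/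
/-!
Call a set of vectors adapted to a subspace `p` if `p` is spanned by the vectors of the set lying
in `p`. For linear maps `V₀ → V₁ → ⋯ → Vₙ` one finds, by induction on `n`, bases such that every
basis vector is sent to a basis vector or to `0`, the basis of `V₀` being moreover adapted to a
given descending chain of subspaces: push the chain forward to `V₁` (preceded by `V₁` itself),
choose bases of `V₁, …, Vₙ` recursively, and take as basis of `V₀` lifts of the basis vectors of
`V₁` lying in the image, each chosen in the smallest member of the chain allowed, completed by a
basis of the kernel adapted to the chain.

In such bases every map has a matrix with entries in `{0, 1}`, so the module is isomorphic to a
chain of coordinate spaces `k^{d_i}` with `0/1` matrices; when all `d_i ≤ M` there are only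
finitely many of these.
-/

open CategoryTheory Module Submodule

universe u

theorem Submodule.le_span_sup_inf_ker {R V W : Type*} [Ring R] [AddCommGroup V] [Module R V]
    [AddCommGroup W] [Module R W] {f : V →ₗ[R] W} {p : Submodule R V} {s : Set V}
    (hs : s ⊆ p) (hmap : p.map f ≤ span R (f '' s)) :
    p ≤ span R s ⊔ p ⊓ LinearMap.ker f := by
  rw [← map_span, LinearMap.map_le_map_iff] at hmap
  rw [inf_comm, ← sup_inf_assoc_of_le _ (span_le.mpr hs)]
  exact le_inf hmap le_rfl

theorem List.Pairwise.top_cons {α : Type*} [Preorder α] [OrderTop α] {l : List α}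
    (hl : l.Pairwise (· ≥ ·)) : (⊤ :: l).Pairwise (· ≥ ·) :=
  List.pairwise_cons.mpr ⟨fun _ _ => le_top, hl⟩

theorem exists_lift_mem_of_mem_map {R V W : Type*} [Semiring R] [AddCommMonoid V] [Module R V]
    [AddCommMonoid W] [Module R W] (f : V →ₗ[R] W) (l : List (Submodule R V))
    (hl : l.Pairwise (· ≥ ·)) {w : W} (hw : w ∈ LinearMap.range f) :
    ∃ v, f v = w ∧ ∀ p ∈ l, w ∈ p.map f → v ∈ p := by
  induction l with
  | nil => simpa using hw
  | cons q l ih =>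
    obtain ⟨hq, hl⟩ := List.pairwise_cons.mp hl
    obtain ⟨v, hv, hvl⟩ := ih hl
    by_cases hwl : ∃ p ∈ l, w ∈ p.map f
    · obtain ⟨p, hp, hwp⟩ := hwl
      refine ⟨v, hv, ?_⟩
      rintro p' (_ | ⟨_, hp'⟩) hwp'
      exacts [hq p hp (hvl p hp hwp), hvl p' hp' hwp']
    by_cases hwq : w ∈ q.map f
    · obtain ⟨v', hv'q, hv'⟩ := hwq
      refine ⟨v', hv', ?_⟩
      rintro p' (_ | ⟨_, hp'⟩) hwp'
      exacts [hv'q, (hwl ⟨p', hp', hwp'⟩).elim]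
    · refine ⟨v, hv, ?_⟩
      rintro p' (_ | ⟨_, hp'⟩) hwp'
      exacts [(hwq hwp').elim, hvl p' hp' hwp']

section AdaptedSets

variable {k V W : Type*} [DivisionRing k] [AddCommGroup V] [Module k V] [AddCommGroup W]
  [Module k W]

theorem exists_linearIndepOn_adapted_to_chain (p₀ : Submodule k V) (l : List (Submodule k V))
    (hl : (p₀ :: l).Pairwise (· ≥ ·)) :
    ∃ b ⊆ (p₀ : Set V), LinearIndepOn k id b ∧ ∀ p ∈ p₀ :: l, p ≤ span k (b ∩ p) := by
  induction l generalizing p₀ with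
  | nil =>
    obtain ⟨b, hbp, hspan, hb⟩ := exists_linearIndependent k (p₀ : Set V)
    refine ⟨b, hbp, hb, ?_⟩
    simp only [List.mem_singleton, forall_eq, Set.inter_eq_left.mpr hbp, hspan, span_eq, le_rfl]
  | cons q l ih =>
    obtain ⟨hp₀, hl⟩ := List.pairwise_cons.mp hl
    obtain ⟨b', hb'q, hb', hb'l⟩ := ih q hl
    obtain ⟨b, hbp, hb'b, hspan, hb⟩ :=
      exists_linearIndepOn_id_extension hb' (hb'q.trans (hp₀ q List.mem_cons_self))
    refine ⟨b, hbp, hb, ?_⟩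
    rintro p (_ | ⟨_, hp⟩)
    · rw [Set.inter_eq_left.mpr hbp]
      exact hspan
    · exact (hb'l p hp).trans (span_mono (Set.inter_subset_inter_left _ hb'b))

theorem exists_linearIndepOn_adapted_to_chain_mapping_to (f : V →ₗ[k] W)
    (l : List (Submodule k V)) (hl : l.Pairwise (· ≥ ·)) {c : Set W} (hc : LinearIndepOn k id c)
    (hcl : ∀ p ∈ ⊤ :: l, p.map f ≤ span k (c ∩ p.map f)) :
    ∃ b : Set V, LinearIndepOn k id b ∧ (∀ p ∈ ⊤ :: l, p ≤ span k (b ∩ p)) ∧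
      ∀ v ∈ b, f v = 0 ∨ f v ∈ c := by
  choose! g hfg hg using fun w (hw : w ∈ LinearMap.range f) => exists_lift_mem_of_mem_map f l hl hw
  set K := LinearMap.ker f
  obtain ⟨bK, hbK, hbKli, hbKl⟩ := exists_linearIndepOn_adapted_to_chain (⊤ ⊓ K) (l.map (· ⊓ K))
    (hl.top_cons.map (S := (· ≥ ·)) _ fun _ _ h => inf_le_inf_right _ h)
  refine ⟨bK ∪ g '' (c ∩ LinearMap.range f), ?_, ?_, ?_⟩
  · -- the lifts stay independent modulo `K`, because `f` sends them back onto part of `c`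
    have hlifts : LinearIndepOn k (K.liftQ f le_rfl ∘ K.mkQ ∘ g) (c ∩ LinearMap.range f) :=
      (hc.mono Set.inter_subset_left).congr fun w hw => by simp [hfg w hw.2]
    exact LinearIndepOn.union_id_of_quotient (fun v hv => (hbK hv).2) hbKli
      (LinearIndepOn.image_of_comp _ _ (hlifts.of_comp _))
  · intro p hp
    have hgp : g '' (c ∩ p.map f) ⊆ p := by
      rintro _ ⟨w, ⟨-, hw⟩, rfl⟩
      rcases List.mem_cons.mp hp with rfl | hp
      exacts [trivial, hg w (LinearMap.map_le_range hw) p hp hw]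
    have hfgp : f '' (g '' (c ∩ p.map f)) = c ∩ p.map f := by
      rw [Set.image_image]
      exact (Set.image_congr fun w (hw : w ∈ c ∩ p.map f) =>
        hfg w (LinearMap.map_le_range hw.2)).trans (Set.image_id _)
    calc p ≤ span k (g '' (c ∩ p.map f)) ⊔ p ⊓ K :=
          le_span_sup_inf_ker hgp (by rw [hfgp]; exact hcl p hp)
      _ ≤ span k ((bK ∪ g '' (c ∩ LinearMap.range f)) ∩ p) := by
        refine sup_le (span_mono ?_)
          ((hbKl _ (List.mem_map_of_mem (f := (· ⊓ K)) hp)).trans (span_mono ?_))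
        · exact Set.subset_inter (Set.subset_union_of_subset_right
            (Set.image_mono (Set.inter_subset_inter_right _ LinearMap.map_le_range)) _) hgp
        · exact fun v hv => ⟨Or.inl hv.1, hv.2.1⟩
  · rintro v (hv | ⟨w, hw, rfl⟩)
    · exact Or.inl (hbK hv).2
    · rw [hfg w hw.2]
      exact Or.inr hw.1

theorem exists_spanning_linearIndepOn_map_eq_zero_or_mem {n : ℕ} (V : Fin (n + 1) → Type*)
    [∀ q, AddCommGroup (V q)] [∀ q, Module k (V q)] (f : ∀ i : Fin n, V i.castSucc →ₗ[k] V i.succ)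
    (l : List (Submodule k (V 0))) (hl : l.Pairwise (· ≥ ·)) :
    ∃ b : ∀ q, Set (V q), (∀ q, LinearIndepOn k id (b q) ∧ ⊤ ≤ span k (b q)) ∧
      (∀ p ∈ l, p ≤ span k (b 0 ∩ p)) ∧
      ∀ (i : Fin n), ∀ v ∈ b i.castSucc, f i v = 0 ∨ f i v ∈ b i.succ := by
  induction n with
  | zero =>
    obtain ⟨b, -, hb, hbl⟩ := exists_linearIndepOn_adapted_to_chain ⊤ l hl.top_cons
    refine ⟨Fin.cons b finZeroElim, Fin.cases ⟨hb, ?_⟩ finZeroElim,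
      fun p hp => hbl p (List.mem_cons_of_mem _ hp), finZeroElim⟩
    exact (hbl ⊤ List.mem_cons_self).trans (span_mono Set.inter_subset_left)
  | succ n ih =>
    obtain ⟨b', hb', hb'0, hb'f⟩ := ih (fun q => V q.succ) (fun i => f i.succ)
      ((⊤ :: l).map (map (f 0))) (hl.top_cons.map (S := (· ≥ ·)) _ fun _ _ h => map_mono h)
    obtain ⟨b₀, hb₀, hb₀l, hb₀f⟩ := exists_linearIndepOn_adapted_to_chain_mapping_to (f 0) l hl
      (hb' 0).1 fun p hp => hb'0 _ (List.mem_map_of_mem hp)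
    refine ⟨Fin.cons b₀ b', Fin.cases ⟨hb₀, ?_⟩ hb', fun p hp => hb₀l p (List.mem_cons_of_mem _ hp),
      Fin.cases hb₀f hb'f⟩
    exact (hb₀l ⊤ List.mem_cons_self).trans (span_mono Set.inter_subset_left)

theorem exists_basis_fin_finrank_range_eq [FiniteDimensional k V] {b : Set V}
    (hb : LinearIndepOn k id b) (hspan : ⊤ ≤ span k b) :
    ∃ B : Basis (Fin (finrank k V)) k V, Set.range B = b := by
  let B₀ : Basis b k V := .mk (v := (↑)) hb (by simpa using hspan)
  refine ⟨B₀.reindex (B₀.indexEquiv (finBasis k V)), ?_⟩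
  rw [Basis.range_reindex]
  exact (congrArg Set.range (Basis.coe_mk _ _)).trans Subtype.range_coe

end AdaptedSets

theorem LinearMap.toMatrix_apply_mem_zero_one {R M N ι κ : Type*} [CommSemiring R]
    [AddCommMonoid M] [Module R M] [AddCommMonoid N] [Module R N] [Fintype ι] [Finite κ]
    [DecidableEq ι] (B : Basis ι R M) (C : Basis κ R N) {f : M →ₗ[R] N}
    (hf : ∀ x, f (B x) = 0 ∨ f (B x) ∈ Set.range C) (y : κ) (x : ι) :
    toMatrix B C f y x ∈ ({0, 1} : Set R) := by
  classical
  rw [toMatrix_apply]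
  obtain hx | ⟨z, hz⟩ := hf x
  · simp [hx]
  · rw [← hz, Basis.repr_self, Finsupp.single_apply]
    split_ifs <;> simp

namespace CategoryTheory.ComposableArrows

theorem exists_bases_map_basis_eq_zero_or_mem_range {k : Type u} [Field k] {n : ℕ}
    (F : ComposableArrows (ModuleCat.{u} k) n) [∀ q, FiniteDimensional k (F.obj q)] :
    ∃ B : ∀ q, Basis (Fin (finrank k (F.obj q))) k (F.obj q), ∀ (i : Fin n) x,
      (F.map' i (i + 1)).hom (B i.castSucc x) = 0 ∨
        (F.map' i (i + 1)).hom (B i.castSucc x) ∈ Set.range (B i.succ) := by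
  obtain ⟨b, hb, -, hbf⟩ := exists_spanning_linearIndepOn_map_eq_zero_or_mem (fun q => F.obj q)
    (fun i => (F.map' i (i + 1)).hom) [] List.Pairwise.nil
  choose B hB using fun q => exists_basis_fin_finrank_range_eq (hb q).1 (hb q).2
  refine ⟨B, fun i x => ?_⟩
  rw [hB]
  exact hbf i _ (hB _ ▸ Set.mem_range_self x)

variable {R : Type u} [CommRing R] {n : ℕ}

noncomputable def matrixChain (d : Fin (n + 1) → ℕ)
    (A : ∀ i : Fin n, Matrix (Fin (d i.succ)) (Fin (d i.castSucc)) R) :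
    ComposableArrows (ModuleCat.{u} R) n :=
  mkOfObjOfMapSucc (fun q => ModuleCat.of R (Fin (d q) → R))
    fun i => ModuleCat.ofHom (Matrix.toLin' (A i))

noncomputable def isoMatrixChain (F : ComposableArrows (ModuleCat.{u} R) n)
    {d : Fin (n + 1) → ℕ} (B : ∀ q, Basis (Fin (d q)) R (F.obj q)) :
    F ≅ matrixChain d fun i =>
      LinearMap.toMatrix (B i.castSucc) (B i.succ) (F.map' i (i + 1)).hom :=
  isoMk (fun q => (B q).equivFun.toModuleIso) fun i hi => by
    dsimp only [matrixChain]
    rw [mkOfObjOfMapSucc_map_succ _ _ i hi]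
    ext v : 2
    change ⇑((B _).repr _) = (LinearMap.toMatrix (B _) (B _) _).mulVec ((B _).repr v)
    exact (LinearMap.toMatrix_mulVec_repr _ _ _ v).symm

end CategoryTheory.ComposableArrows

open CategoryTheory.ComposableArrows

def ZeroOneMatrixChain (R : Type*) [Zero R] [One R] (n M : ℕ) : Type _ :=
  Σ d : Fin (n + 1) → Fin (M + 1),
    ∀ i : Fin n, Matrix (Fin (d i.succ)) (Fin (d i.castSucc)) ({0, 1} : Set R)

instance (R : Type*) [Zero R] [One R] (n M : ℕ) : Finite (ZeroOneMatrixChain R n M) := by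
  unfold ZeroOneMatrixChain
  infer_instance

noncomputable def ZeroOneMatrixChain.toComposableArrows {R : Type u} [CommRing R] {n M : ℕ}
    (p : ZeroOneMatrixChain R n M) : ComposableArrows (ModuleCat.{u} R) n :=
  matrixChain (fun q => p.1 q) fun i => (p.2 i).map (↑)

theorem ZeroOneMatrixChain.exists_iso {k : Type u} [Field k] {n : ℕ} (M : ℕ)
    (F : ComposableArrows (ModuleCat.{u} k) n) [∀ q, FiniteDimensional k (F.obj q)]
    (hdim : ∀ q, finrank k (F.obj q) ≤ M) :
    ∃ p : ZeroOneMatrixChain k n M, Nonempty (F ≅ p.toComposableArrows) := by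
  obtain ⟨B, hB⟩ := exists_bases_map_basis_eq_zero_or_mem_range F
  let d q : Fin (M + 1) := ⟨finrank k (F.obj q), Nat.lt_succ_of_le (hdim q)⟩
  exact ⟨⟨d, fun i => .of fun y x =>
    ⟨_, LinearMap.toMatrix_apply_mem_zero_one (B _) (B _) (hB i) y x⟩⟩, ⟨isoMatrixChain F B⟩⟩

/-- Poset modules over the finite linear order `Fin N` whose values are all
finite dimensional of dimension at most `M` fall into finitely many
isomorphism classes: there are finitely many functors `F₁, …, F_t` such that
every such functor is naturally isomorphic to some `F_s`. -/
theorem linear_poset_modules_finitely_many_iso_classes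
    (k : Type) [Field k] (N M : ℕ) (hN : 1 ≤ N) :
    ∃ (t : ℕ) (Fs : Fin t → (Fin N ⥤ ModuleCat.{0} k)),
      ∀ F : Fin N ⥤ ModuleCat.{0} k,
        (∀ i : Fin N, FiniteDimensional k (F.obj i)) →
        (∀ i : Fin N, Module.finrank k (F.obj i) ≤ M) →
        ∃ s : Fin t, Nonempty (F ≅ Fs s) := by
  obtain ⟨n, rfl⟩ : ∃ n, N = n + 1 := ⟨N - 1, by omega⟩
  obtain ⟨t, ⟨e⟩⟩ := Finite.exists_equiv_fin (ZeroOneMatrixChain k n M)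
  refine ⟨t, fun s => (e.symm s).toComposableArrows, fun F _ hdim => ?_⟩
  obtain ⟨p, hp⟩ := ZeroOneMatrixChain.exists_iso M F hdim
  exact ⟨e p, by simpa only [Equiv.symm_apply_apply] using hp⟩
end
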